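/- arXiv:0711.0173 — 2 statements merged into one kernel-verified Lean document; each statement's English description precedes it below -/
import Mathlib

section
/- Let L ⊆ ℝ be a nonempty bounded open set, the disjoint union of countably many open intervals of lengths ℓ_1, ℓ_2, …, and let D = inf{ t ≥ 0 : ∃ C > 0 such that V_L(ε) ≤ C ε^{1−t} for all ε ∈ (0,1] } be the Minkowski dimension of ∂L. Then inf{ σ > 0 : ∑_n ℓ_n^σ < ∞ } = D; equivalently, for σ > 0 the series ∑_n ℓ_n^s converges absolutely on the half-plane {s ∈ ℂ : Re s > σ} if and only if σ ≥ D. -/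
/-!
A point of the interval `I_n` is within `ε` of `∂L` exactly when it is within `ε` of an endpoint
of `I_n`, so `V_L(ε) = ∑ₙ min(ℓₙ, 2ε)`. If `∑ ℓₙ^σ < ∞` with `σ ≤ 1`, the inequality
`min(ℓ, 2ε) ≤ ℓ^σ (2ε)^(1-σ)` gives `V_L(ε) = O(ε^(1-σ))`. Conversely, if `V_L(ε) ≤ c ε^(1-t)` and
`σ > t`, every `ℓ ≤ 1` satisfies `ℓ^σ ≤ 2^σ ∑ₖ 2^(k(1-σ)) min(ℓ, 2^(-k))`; exchanging the two sums
bounds `∑ ℓₙ^σ` by the geometric series `∑ₖ c' 2^(k(t-σ))`. Finally `‖ℓ^s‖ = ℓ^(Re s)`, and the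
exponents `σ` with `∑ ℓₙ^σ < ∞` form an upper set since `ℓₙ → 0`.
-/

open MeasureTheory Metric Set Filter Topology

theorem Real.min_le_rpow_mul_rpow {x y σ : ℝ} (hx : 0 ≤ x) (hy : 0 ≤ y) (hσ₀ : 0 ≤ σ)
    (hσ₁ : σ ≤ 1) : min x y ≤ x ^ σ * y ^ (1 - σ) := by
  have hm : 0 ≤ min x y := le_min hx hy
  calc min x y = min x y ^ (σ + (1 - σ)) := by rw [add_sub_cancel, Real.rpow_one]
    _ = min x y ^ σ * min x y ^ (1 - σ) := Real.rpow_add' hm (by norm_num)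
    _ ≤ x ^ σ * y ^ (1 - σ) := by
      gcongr
      · exact min_le_left x y
      · exact min_le_right x y

theorem tsum_min_le_tsum_rpow_mul {ι : Type*} {ℓ : ι → ℝ} {σ ε : ℝ} (hℓ : ∀ n, 0 ≤ ℓ n)
    (hε : 0 ≤ ε) (hσ₀ : 0 ≤ σ) (hσ₁ : σ ≤ 1) (hs : Summable fun n => ℓ n ^ σ) :
    ∑' n, min (ℓ n) ε ≤ (∑' n, ℓ n ^ σ) * ε ^ (1 - σ) := by
  have hle n : min (ℓ n) ε ≤ ℓ n ^ σ * ε ^ (1 - σ) :=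
    Real.min_le_rpow_mul_rpow (hℓ n) hε hσ₀ hσ₁
  have hs' : Summable fun n => ℓ n ^ σ * ε ^ (1 - σ) := hs.mul_right _
  rw [← tsum_mul_right]
  exact (hs'.of_nonneg_of_le (fun n => le_min (hℓ n) hε) hle).tsum_le_tsum hle hs'

theorem summable_dyadic_min {x σ : ℝ} (hx : 0 ≤ x) (hσ : 0 < σ) :
    Summable fun k : ℕ => ((2⁻¹ : ℝ) ^ k) ^ (σ - 1) * min x ((2⁻¹ : ℝ) ^ k) := by
  refine Summable.of_nonneg_of_le (fun k => by positivity) (fun k => ?_)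
    (summable_geometric_of_lt_one (r := (2⁻¹ : ℝ) ^ σ) (by positivity)
      (Real.rpow_lt_one (by norm_num) (by norm_num) hσ))
  calc ((2⁻¹ : ℝ) ^ k) ^ (σ - 1) * min x ((2⁻¹ : ℝ) ^ k)
      ≤ ((2⁻¹ : ℝ) ^ k) ^ (σ - 1) * (2⁻¹ : ℝ) ^ k :=
        mul_le_mul_of_nonneg_left (min_le_right _ _) (by positivity)
    _ = ((2⁻¹ : ℝ) ^ σ) ^ k := by
      rw [Real.rpow_pow_comm (by norm_num), ← Real.rpow_add_one (by positivity), sub_add_cancel]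

theorem rpow_le_two_rpow_mul_tsum_dyadic_min {x σ : ℝ} (hx₀ : 0 ≤ x) (hx₁ : x ≤ 1) (hσ : 0 < σ) :
    x ^ σ ≤ 2 ^ σ * ∑' k : ℕ, ((2⁻¹ : ℝ) ^ k) ^ (σ - 1) * min x ((2⁻¹ : ℝ) ^ k) := by
  have hF₀ (k : ℕ) : 0 ≤ ((2⁻¹ : ℝ) ^ k) ^ (σ - 1) * min x ((2⁻¹ : ℝ) ^ k) := by positivity
  rcases hx₀.eq_or_lt with rfl | hx
  · rw [Real.zero_rpow hσ.ne']
    exact mul_nonneg (by positivity) (tsum_nonneg hF₀)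
  obtain ⟨k, hk, hxk⟩ := exists_nat_pow_near_of_lt_one hx hx₁ (by norm_num : (0:ℝ) < 2⁻¹)
    (by norm_num)
  calc x ^ σ ≤ (2 * (2⁻¹ : ℝ) ^ (k + 1)) ^ σ := by gcongr; rw [pow_succ]; linarith
    _ = 2 ^ σ * (((2⁻¹ : ℝ) ^ (k + 1)) ^ (σ - 1) * min x ((2⁻¹ : ℝ) ^ (k + 1))) := by
        rw [min_eq_right hk.le, Real.mul_rpow (by norm_num) (by positivity),
          ← Real.rpow_add_one (by positivity), sub_add_cancel]
    _ ≤ _ := by gcongr; exact (summable_dyadic_min hx₀ hσ).le_tsum _ (fun j _ => hF₀ j)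

theorem summable_rpow_of_tsum_min_le {ι : Type*} {ℓ : ι → ℝ} {c t σ : ℝ} (hℓ : ∀ n, 0 ≤ ℓ n)
    (hsum : Summable ℓ) (hσ : 0 < σ) (htσ : t < σ)
    (hV : ∀ ε ∈ Ioc (0 : ℝ) 1, ∑' n, min (ℓ n) ε ≤ c * ε ^ (1 - t)) :
    Summable fun n => ℓ n ^ σ := by
  set F : ι → ℕ → ℝ := fun n k => ((2⁻¹ : ℝ) ^ k) ^ (σ - 1) * min (ℓ n) ((2⁻¹ : ℝ) ^ k)
  set r : ℝ := (2⁻¹ : ℝ) ^ (σ - t)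
  have hr : Summable fun k : ℕ => c * r ^ k := (summable_geometric_of_lt_one (by positivity)
    (Real.rpow_lt_one (by norm_num) (by norm_num) (sub_pos.2 htσ))).mul_left c
  have hF₀ n k : 0 ≤ F n k := mul_nonneg (by positivity) (le_min (hℓ n) (by positivity))
  have hFs n : Summable (F n) := summable_dyadic_min (hℓ n) hσ
  have hcol (u : Finset ι) (k : ℕ) : ∑ n ∈ u, F n k ≤ c * r ^ k := by
    have hmin : Summable fun n => min (ℓ n) ((2⁻¹ : ℝ) ^ k) :=
      hsum.of_nonneg_of_le (fun n => le_min (hℓ n) (by positivity)) (fun n => min_le_left _ _)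
    calc ∑ n ∈ u, F n k = ((2⁻¹ : ℝ) ^ k) ^ (σ - 1) * ∑ n ∈ u, min (ℓ n) ((2⁻¹ : ℝ) ^ k) := by
          rw [Finset.mul_sum]
      _ ≤ ((2⁻¹ : ℝ) ^ k) ^ (σ - 1) * (c * ((2⁻¹ : ℝ) ^ k) ^ (1 - t)) := by
          gcongr
          exact (hmin.sum_le_tsum u fun n _ => le_min (hℓ n) (by positivity)).trans
            (hV _ ⟨by positivity, pow_le_one₀ (by norm_num) (by norm_num)⟩)
      _ = c * r ^ k := by
          rw [mul_left_comm, ← Real.rpow_add (by positivity), sub_add_sub_cancel,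
            ← Real.rpow_pow_comm (by norm_num)]
  have hsmall : Summable fun n => if ℓ n ≤ 1 then ℓ n ^ σ else 0 := by
    refine summable_of_sum_le (c := 2 ^ σ * ∑' k, c * r ^ k)
      (fun n => by dsimp only; split_ifs; exacts [Real.rpow_nonneg (hℓ n) σ, le_rfl]) fun u => ?_
    calc ∑ n ∈ u, (if ℓ n ≤ 1 then ℓ n ^ σ else 0) ≤ ∑ n ∈ u, 2 ^ σ * ∑' k, F n k := by
          gcongr with n
          split_ifs with h
          · exact rpow_le_two_rpow_mul_tsum_dyadic_min (hℓ n) h hσ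
          · exact mul_nonneg (by positivity) (tsum_nonneg (hF₀ n))
      _ = 2 ^ σ * ∑' k, ∑ n ∈ u, F n k := by
          rw [← Finset.mul_sum, Summable.tsum_finsetSum fun n _ => hFs n]
      _ ≤ 2 ^ σ * ∑' k, c * r ^ k := by
          refine mul_le_mul_of_nonneg_left ?_ (by positivity)
          exact (summable_sum fun n _ => hFs n).tsum_le_tsum (hcol u) hr
  refine hsmall.congr_cofinite ?_
  filter_upwards [hsum.tendsto_cofinite_zero.eventually (ge_mem_nhds one_pos)] with n hn
  rw [if_pos hn]

theorem summable_rpow_of_le {ι : Type*} {ℓ : ι → ℝ} {τ τ' : ℝ} (hℓ : ∀ n, 0 ≤ ℓ n)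
    (hℓ₀ : Tendsto ℓ cofinite (𝓝 0)) (hτ : 0 ≤ τ) (hττ' : τ ≤ τ')
    (hs : Summable fun n => ℓ n ^ τ) : Summable fun n => ℓ n ^ τ' := by
  refine hs.of_norm_bounded_eventually ?_
  filter_upwards [hℓ₀.eventually (ge_mem_nhds one_pos)] with n hn
  rw [Real.norm_of_nonneg (Real.rpow_nonneg (hℓ n) _)]
  exact Real.rpow_le_rpow_of_exponent_ge' (hℓ n) hn hτ hττ'

theorem Metric.infDist_eq_min_of_Ioo {s : Set ℝ} {a b x : ℝ} (ha : a ∈ s) (hb : b ∈ s)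
    (hs : Disjoint (Ioo a b) s) (hx : x ∈ Ioo a b) : infDist x s = min (x - a) (b - x) := by
  refine le_antisymm (le_min ?_ ?_) ((le_infDist ⟨a, ha⟩).2 fun y hy => ?_)
  · simpa [Real.dist_eq, abs_of_pos (sub_pos.2 hx.1)] using infDist_le_dist_of_mem (x := x) ha
  · simpa [Real.dist_eq, abs_of_neg (sub_neg.2 hx.2)] using infDist_le_dist_of_mem (x := x) hb
  have hy' : y ∉ Ioo a b := fun h => hs.ne_of_mem h hy rfl
  rw [mem_Ioo, not_and_or, not_lt, not_lt] at hy'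
  rw [Real.dist_eq]
  rcases hy' with h | h
  · exact (min_le_left _ _).trans (le_abs.2 (Or.inl (by linarith)))
  · exact (min_le_right _ _).trans (le_abs.2 (Or.inr (by linarith)))

theorem frontier_subset_frontier_iUnion {ι X : Type*} [TopologicalSpace X] {U : ι → Set X}
    (hU : ∀ n, IsOpen (U n)) (hdisj : Pairwise (Function.onFun Disjoint U)) (n : ι) :
    frontier (U n) ⊆ frontier (⋃ m, U m) := by
  rw [(hU n).frontier_eq, (isOpen_iUnion hU).frontier_eq]
  rintro x ⟨hxc, hxn⟩
  refine ⟨closure_mono (subset_iUnion U n) hxc, fun hx => ?_⟩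
  obtain ⟨m, hxm⟩ := mem_iUnion.1 hx
  rcases eq_or_ne m n with rfl | hmn
  · exact hxn hxm
  · exact ((hdisj hmn).symm.closure_left (hU m)).ne_of_mem hxc hxm rfl

theorem Ioo_sep_min_sub_le_eq_sdiff {a b ε : ℝ} :
    {x ∈ Ioo a b | min (x - a) (b - x) ≤ ε} = Ioo a b \ Ioo (a + ε) (b - ε) := by
  ext x
  simp only [mem_ofPred_eq, Set.mem_sdiff, mem_Ioo, min_le_iff, not_and_or, not_lt]
  constructor <;> rintro ⟨hx, h⟩ <;> refine ⟨hx, ?_⟩ <;> rcases h with h | h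
  all_goals first | (left; linarith) | (right; linarith)

theorem volume_Ioo_diff_Ioo {a b ε : ℝ} (hε : 0 ≤ ε) :
    volume (Ioo a b \ Ioo (a + ε) (b - ε)) = ENNReal.ofReal (min (b - a) (2 * ε)) := by
  rcases le_or_gt (b - a) (2 * ε) with h | h
  · rw [Ioo_eq_empty (a := a + ε) (by linarith), sdiff_empty, Real.volume_Ioo, min_eq_left h]
  · rw [measure_sdiff (Ioo_subset_Ioo (by linarith) (by linarith))
      measurableSet_Ioo.nullMeasurableSet measure_Ioo_lt_top.ne, Real.volume_Ioo, Real.volume_Ioo,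
      min_eq_right h.le, ← ENNReal.ofReal_sub _ (by linarith)]
    congr 1
    ring

theorem volume_innerNbhd_iUnion_Ioo {a b : ℕ → ℝ} (hab : ∀ n, a n < b n)
    (hdisj : Pairwise (Function.onFun Disjoint fun n => Ioo (a n) (b n))) {ε : ℝ} (hε : 0 ≤ ε) :
    (volume {x ∈ ⋃ n, Ioo (a n) (b n) |
        infDist x (frontier (⋃ n, Ioo (a n) (b n))) ≤ ε}).toReal =
      ∑' n, min (b n - a n) (2 * ε) := by
  set L := ⋃ n, Ioo (a n) (b n)
  have hfr n : a n ∈ frontier L ∧ b n ∈ frontier L := by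
    have := frontier_subset_frontier_iUnion (fun n => isOpen_Ioo) hdisj n
    rw [frontier_Ioo (hab n)] at this
    exact ⟨this (mem_insert _ _), this (mem_insert_of_mem _ rfl)⟩
  have hdisjL n : Disjoint (Ioo (a n) (b n)) (frontier L) := by
    rw [(isOpen_iUnion fun n => isOpen_Ioo).frontier_eq]
    exact disjoint_sdiff_right.mono_left (subset_iUnion (fun n => Ioo (a n) (b n)) n)
  have hset : {x ∈ L | infDist x (frontier L) ≤ ε} =
      ⋃ n, Ioo (a n) (b n) \ Ioo (a n + ε) (b n - ε) := by
    simp_rw [← Ioo_sep_min_sub_le_eq_sdiff]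
    ext x
    simp only [L, mem_ofPred_eq, mem_iUnion]
    constructor
    · rintro ⟨⟨n, hx⟩, h⟩
      exact ⟨n, hx, by rwa [← infDist_eq_min_of_Ioo (hfr n).1 (hfr n).2 (hdisjL n) hx]⟩
    · rintro ⟨n, hx, h⟩
      exact ⟨⟨n, hx⟩, by rwa [infDist_eq_min_of_Ioo (hfr n).1 (hfr n).2 (hdisjL n) hx]⟩
  rw [hset, measure_iUnion (fun m n hmn => (hdisj hmn).mono sdiff_subset sdiff_subset)
    (fun n => measurableSet_Ioo.diff measurableSet_Ioo), ENNReal.tsum_toReal_eq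
    (fun n => measure_ne_top_of_subset sdiff_subset measure_Ioo_lt_top.ne)]
  congr 1 with n
  rw [volume_Ioo_diff_Ioo hε, ENNReal.toReal_ofReal (by have := hab n; positivity)]

theorem summable_sub_of_isBounded_iUnion_Ioo {a b : ℕ → ℝ} (hab : ∀ n, a n < b n)
    (hdisj : Pairwise (Function.onFun Disjoint fun n => Ioo (a n) (b n)))
    (hbdd : Bornology.IsBounded (⋃ n, Ioo (a n) (b n))) : Summable fun n => b n - a n := by
  have hvol : volume (⋃ n, Ioo (a n) (b n)) = ∑' n, ENNReal.ofReal (b n - a n) := by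
    simp_rw [measure_iUnion hdisj fun n => measurableSet_Ioo, Real.volume_Ioo]
  refine (ENNReal.summable_toReal (hvol ▸ hbdd.measure_lt_top.ne)).congr fun n => ?_
  exact ENNReal.toReal_ofReal (sub_pos.2 (hab n)).le

theorem csInf_eq_csInf_of_forall_exists_le_of_Ioi_subset {S T : Set ℝ} (hT : T.Nonempty)
    (hTb : BddBelow T) (hST : ∀ σ ∈ S, ∃ t ∈ T, t ≤ σ) (hTS : ∀ t ∈ T, Ioi t ⊆ S) : sInf S = sInf T := by
  obtain ⟨t₀, ht₀⟩ := hT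
  have hSb : BddBelow S := by
    obtain ⟨m, hm⟩ := hTb
    exact ⟨m, fun σ hσ => by obtain ⟨t, ht, htσ⟩ := hST σ hσ; exact (hm ht).trans htσ⟩
  refine le_antisymm (le_csInf ⟨t₀, ht₀⟩ fun t ht => ?_) (le_csInf ⟨t₀ + 1, hTS t₀ ht₀ (by simp)⟩
    fun σ hσ => ?_)
  · exact le_of_forall_gt_imp_ge_of_dense fun σ hσ => csInf_le hSb (hTS t ht hσ)
  · obtain ⟨t, ht, htσ⟩ := hST σ hσ
    exact (csInf_le hTb ht).trans htσ

theorem IsUpperSet.Ioi_subset_iff_csInf_le {S : Set ℝ} (hS : IsUpperSet S) (hne : S.Nonempty)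
    (hSb : BddBelow S) {σ : ℝ} : Ioi σ ⊆ S ↔ sInf S ≤ σ := by
  refine ⟨fun h => le_of_forall_gt_imp_ge_of_dense fun τ hτ => csInf_le hSb (h hτ),
    fun h τ hτ => ?_⟩
  obtain ⟨s, hs, hsτ⟩ := exists_lt_of_csInf_lt hne (h.trans_lt hτ)
  exact hS hsτ.le hs

theorem sInf_summable_rpow_eq_sInf_tsum_min_le {ι : Type*} {ℓ : ι → ℝ} (hℓ : ∀ n, 0 ≤ ℓ n)
    (hsum : Summable ℓ) :
    sInf {σ : ℝ | 0 < σ ∧ Summable fun n => ℓ n ^ σ} =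
      sInf {t : ℝ | 0 ≤ t ∧ ∃ c : ℝ, 0 < c ∧
        ∀ ε ∈ Ioc (0 : ℝ) 1, ∑' n, min (ℓ n) (2 * ε) ≤ c * ε ^ (1 - t)} := by
  set S := {σ : ℝ | 0 < σ ∧ Summable fun n => ℓ n ^ σ}
  set T := {t : ℝ | 0 ≤ t ∧ ∃ c : ℝ, 0 < c ∧
    ∀ ε ∈ Ioc (0 : ℝ) 1, ∑' n, min (ℓ n) (2 * ε) ≤ c * ε ^ (1 - t)}
  have hST σ (hσ : σ ∈ S) (hσ₁ : σ ≤ 1) : σ ∈ T := by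
    have hsum₀ : 0 ≤ ∑' n, ℓ n ^ σ := tsum_nonneg fun n => Real.rpow_nonneg (hℓ n) σ
    refine ⟨hσ.1.le, (∑' n, ℓ n ^ σ) * 2 ^ (1 - σ) + 1, by positivity, fun ε hε => ?_⟩
    calc _ ≤ (∑' n, ℓ n ^ σ) * (2 * ε) ^ (1 - σ) :=
          tsum_min_le_tsum_rpow_mul hℓ (by linarith [hε.1]) hσ.1.le hσ₁ hσ.2
      _ ≤ _ := by
        rw [Real.mul_rpow zero_le_two hε.1.le, ← mul_assoc]
        exact mul_le_mul_of_nonneg_right (by linarith) (Real.rpow_nonneg hε.1.le _)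
  have hTS t (ht : t ∈ T) : Ioi t ⊆ S := by
    obtain ⟨ht₀, c, -, hc⟩ := ht
    refine fun σ hσ => ⟨ht₀.trans_lt hσ, summable_rpow_of_tsum_min_le (c := c / 2 ^ (1 - t))
      hℓ hsum (ht₀.trans_lt hσ) hσ fun ε hε => ?_⟩
    have hε₂ : ε / 2 ∈ Ioc (0 : ℝ) 1 := ⟨by linarith [hε.1], by linarith [hε.2]⟩
    calc _ = ∑' n, min (ℓ n) (2 * (ε / 2)) := by rw [mul_div_cancel₀ ε two_ne_zero]
      _ ≤ c * (ε / 2) ^ (1 - t) := hc _ hε₂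
      _ = _ := by rw [Real.div_rpow hε.1.le zero_le_two]; ring
  have h1S : (1 : ℝ) ∈ S := ⟨one_pos, by simpa using hsum⟩
  refine csInf_eq_csInf_of_forall_exists_le_of_Ioi_subset ⟨1, hST 1 h1S le_rfl⟩
    ⟨0, fun t ht => ht.1⟩ (fun σ hσ => ?_) hTS
  rcases le_total σ 1 with h | h
  exacts [⟨σ, hST σ hσ h, le_rfl⟩, ⟨1, hST 1 h1S le_rfl, h⟩]

theorem forall_summable_norm_cpow_iff_sInf_le {ι : Type*} {ℓ : ι → ℝ} (hℓ : ∀ n, 0 < ℓ n)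
    (hsum : Summable ℓ) {σ : ℝ} (hσ : 0 < σ) :
    (∀ s : ℂ, σ < s.re → Summable fun n => ‖(ℓ n : ℂ) ^ s‖) ↔
      sInf {σ : ℝ | 0 < σ ∧ Summable fun n => ℓ n ^ σ} ≤ σ := by
  have hS : IsUpperSet {σ : ℝ | 0 < σ ∧ Summable fun n => ℓ n ^ σ} := fun τ τ' hτ hτS =>
    ⟨hτS.1.trans_le hτ, summable_rpow_of_le (fun n => (hℓ n).le) hsum.tendsto_cofinite_zero
      hτS.1.le hτ hτS.2⟩
  rw [← hS.Ioi_subset_iff_csInf_le ⟨1, one_pos, by simpa using hsum⟩ ⟨0, fun τ h => h.1.le⟩]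
  simp_rw [Complex.norm_cpow_eq_rpow_re_of_pos (hℓ _)]
  exact ⟨fun h τ hτ => ⟨hσ.trans hτ, by simpa using h τ (by simpa using hτ)⟩,
    fun h s hs => (h hs).2⟩

/-- Let `L ⊆ ℝ` be a nonempty bounded open set, the disjoint union
of countably many open intervals of lengths `ℓ_n`, and let
`D = inf{ t ≥ 0 : ∃ C > 0, V_L(ε) ≤ C ε^{1−t} for all ε ∈ (0,1] }` be the Minkowski
dimension of `∂L`.  Then `inf{σ > 0 : ∑_n ℓ_n^σ < ∞} = D`; equivalently, for `σ > 0`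
the series `∑_n ℓ_n^s` converges absolutely on the half-plane `{Re s > σ}` if and
only if `σ ≥ D`. -/
theorem stmt_6 (a b : ℕ → ℝ) (hab : ∀ n, a n < b n)
    (L : Set ℝ) (hL : L = ⋃ n, Set.Ioo (a n) (b n))
    (hbdd : Bornology.IsBounded L)
    (hdisj : Pairwise (Function.onFun Disjoint (fun n => Set.Ioo (a n) (b n))))
    (ℓ : ℕ → ℝ) (hℓ : ∀ n, ℓ n = b n - a n)
    (D : ℝ)
    (hD : D = sInf {t : ℝ | 0 ≤ t ∧ ∃ c : ℝ, 0 < c ∧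
      ∀ ε ∈ Set.Ioc (0 : ℝ) 1,
        (volume {x ∈ L | infDist x (frontier L) ≤ ε}).toReal ≤ c * ε ^ (1 - t)}) :
    sInf {σ : ℝ | 0 < σ ∧ Summable (fun n => ℓ n ^ σ)} = D ∧
    ∀ σ : ℝ, 0 < σ →
      ((∀ s : ℂ, σ < s.re → Summable (fun n => ‖(ℓ n : ℂ) ^ s‖)) ↔ D ≤ σ) := by
  obtain rfl : ℓ = fun n => b n - a n := funext hℓ
  have hpos n : 0 < b n - a n := sub_pos.2 (hab n)
  have hsum := summable_sub_of_isBounded_iUnion_Ioo hab hdisj (hL ▸ hbdd)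
  have hSD : sInf {σ : ℝ | 0 < σ ∧ Summable fun n => (b n - a n) ^ σ} = D := by
    rw [hD, sInf_summable_rpow_eq_sInf_tsum_min_le (fun n => (hpos n).le) hsum, hL]
    congr! 6 with t c
    refine and_congr_right' (forall₂_congr fun ε hε => ?_)
    rw [volume_innerNbhd_iUnion_Ioo hab hdisj hε.1.le]
  exact ⟨hSD, fun σ hσ => hSD ▸ forall_summable_norm_cpow_iff_sInf_le hpos hsum hσ⟩
end

section
/- Let Φ = {φ_1, …, φ_J} be a self-similar system on ℝ^d with attractor F and convex hull K = [F], and suppose Φ satisfies the tileset condition. Then the following are equivalent: (i) ∂K ⊆ F; (ii) ∂T = F, where T = int K \ F. -/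
/-!
The pieces `φ j '' K` are convex, so their frontiers are Lebesgue-null and, their interiors being
disjoint, they are almost disjoint. As they lie in `K` without covering `interior K`, the volume
scaling factors satisfy `∑ j, |det φ_j| < 1`. Together with `F ⊆ ⋃ j, φ j '' F` this forces
`vol F = 0`, so `F` has empty interior and `T = interior K \ F` is dense in the convex body `K`.
Hence `frontier T = K \ T = F ∪ frontier K`, which equals `F` exactly when `frontier K ⊆ F`.
-/

open MeasureTheory Set

theorem isCompact_convexHull {E : Type*} [NormedAddCommGroup E] [NormedSpace ℝ E]
    [FiniteDimensional ℝ E] {s : Set E} (hs : IsCompact s) : IsCompact (convexHull ℝ s) := by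
  set C : ℕ → Set E := fun k =>
    (fun p : (Fin k → ℝ) × (Fin k → E) => ∑ i, p.1 i • p.2 i) ''
      (stdSimplex ℝ (Fin k) ×ˢ univ.pi fun _ => s)
  have hC : ∀ k, IsCompact (C k) := fun k =>
    ((isCompact_stdSimplex ℝ (Fin k)).prod (isCompact_univ_pi fun _ => hs)).image <| by fun_prop
  have hCsub : ∀ k, C k ⊆ convexHull ℝ s := by
    rintro k _ ⟨⟨w, z⟩, ⟨hw, hz⟩, rfl⟩
    exact (convex_convexHull ℝ s).sum_mem (fun i _ => hw.1 i) hw.2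
      fun i _ => subset_convexHull ℝ s (hz i (mem_univ i))
  -- Carathéodory: a point of the hull is a convex combination of at most `finrank + 1` points.
  suffices convexHull ℝ s = ⋃ k ∈ Finset.range (Module.finrank ℝ E + 2), C k by
    rw [this]
    exact (Finset.range _).isCompact_biUnion fun k _ => hC k
  refine Subset.antisymm ?_ (iUnion₂_subset fun k _ => hCsub k)
  intro x hx
  obtain ⟨ι, _, z, w, hzs, hz, hw0, hw1, rfl⟩ := eq_pos_convex_span_of_mem_convexHull hx
  have hcard : Fintype.card ι ≤ Module.finrank ℝ E + 1 :=
    hz.card_le_finrank_succ.trans (Nat.succ_le_succ (Submodule.finrank_le _))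
  let e := Fintype.equivFin ι
  refine mem_biUnion (Finset.mem_range.mpr (Nat.lt_succ_of_le hcard))
    ⟨⟨w ∘ e.symm, z ∘ e.symm⟩, ⟨⟨fun i => (hw0 _).le, ?_⟩, fun i _ => hzs ⟨_, rfl⟩⟩, ?_⟩
  · simpa only [Function.comp_apply, e.symm.sum_comp] using hw1
  · exact e.symm.sum_comp fun i => w i • z i

section Haar

variable {E : Type*} [NormedAddCommGroup E] [NormedSpace ℝ E] [MeasurableSpace E] [BorelSpace E]
  [FiniteDimensional ℝ E] (μ : Measure E) [μ.IsAddHaarMeasure]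

theorem MeasureTheory.Measure.addHaar_image_affineMap (f : E →ᵃ[ℝ] E) (s : Set E) :
    μ (f '' s) = ENNReal.ofReal |LinearMap.det f.linear| * μ s := by
  have : ⇑f = (· + f 0) ∘ f.linear := funext fun x => congrFun f.decomp x
  rw [this, image_comp, image_add_right, measure_preimage_add_right,
    Measure.addHaar_image_linearMap]

theorem Convex.aedisjoint_of_disjoint_interior {s t : Set E} (hs : Convex ℝ s)
    (ht : Convex ℝ t) (h : Disjoint (interior s) (interior t)) : AEDisjoint μ s t := by
  refine measure_mono_null (t := frontier s ∪ frontier t) ?_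
    (measure_union_null (hs.addHaar_frontier μ) (ht.addHaar_frontier μ))
  rintro x ⟨hxs, hxt⟩
  by_cases hx : x ∈ interior s
  · exact Or.inr ⟨subset_closure hxt, fun hx' => h.le_bot ⟨hx, hx'⟩⟩
  · exact Or.inl ⟨subset_closure hxs, hx⟩

end Haar

theorem IsClosed.measure_lt_of_not_interior_subset {X : Type*} [TopologicalSpace X]
    [MeasurableSpace X] [OpensMeasurableSpace X] (μ : Measure X) [μ.IsOpenPosMeasure]
    {s t : Set X} (hs : IsClosed s) (hst : s ⊆ t) (hint : ¬ interior t ⊆ s) (hμs : μ s ≠ ⊤) :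
    μ s < μ t := by
  have hU : IsOpen (interior t \ s) := isOpen_interior.sdiff hs
  calc μ s < μ s + μ (interior t \ s) :=
        ENNReal.lt_add_right hμs (hU.measure_ne_zero μ (sdiff_nonempty.mpr hint))
    _ = μ (s ∪ (interior t \ s)) := (measure_union disjoint_sdiff_right hU.measurableSet).symm
    _ ≤ μ t := measure_mono (union_subset hst (sdiff_subset.trans interior_subset))

section SelfAffine

variable {E : Type*} [NormedAddCommGroup E] [NormedSpace ℝ E] [FiniteDimensional ℝ E]
  {ι : Type*} [Fintype ι] (φ : ι → E →ᵃ[ℝ] E)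

theorem sum_ofReal_abs_det_lt_one_of_tileset {K : Set E} (hKconv : Convex ℝ K)
    (hKc : IsCompact K) (hmaps : ∀ j, φ j '' K ⊆ K)
    (hcover : ¬ interior K ⊆ ⋃ j, φ j '' K)
    (hdisj : Pairwise fun j l => Disjoint (interior (φ j '' K)) (interior (φ l '' K))) :
    ∑ j, ENNReal.ofReal |LinearMap.det (φ j).linear| < 1 := by
  borelize E
  let μ : Measure E := Measure.addHaar
  have hμK : μ K ≠ 0 :=
    (μ.measure_pos_of_nonempty_interior (nonempty_of_not_subset hcover).of_sdiff).ne'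
  have hunion : μ (⋃ j, φ j '' K) = (∑ j, ENNReal.ofReal |LinearMap.det (φ j).linear|) * μ K := by
    have hconv : ∀ j, Convex ℝ (φ j '' K) := fun j => hKconv.affine_image (φ j)
    rw [measure_iUnion₀ (fun j l hjl => (hconv j).aedisjoint_of_disjoint_interior μ (hconv l)
      (hdisj hjl)) fun j => (hconv j).nullMeasurableSet μ, tsum_fintype, Finset.sum_mul]
    exact Finset.sum_congr rfl fun j _ => μ.addHaar_image_affineMap (φ j) K
  have hlt : μ (⋃ j, φ j '' K) < μ K :=
    (isClosed_iUnion_of_finite fun j =>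
      (hKc.image (φ j).continuous_of_finiteDimensional).isClosed).measure_lt_of_not_interior_subset
      μ (iUnion_subset hmaps) hcover
      ((measure_mono (iUnion_subset hmaps)).trans_lt hKc.measure_lt_top).ne
  rw [hunion] at hlt
  exact (ENNReal.mul_lt_mul_iff_left hμK hKc.measure_lt_top.ne).mp (by rwa [one_mul])

theorem interior_eq_empty_of_subset_iUnion_image {F : Set E} (hFc : IsCompact F)
    (hF : F ⊆ ⋃ j, φ j '' F) (hφ : ∑ j, ENNReal.ofReal |LinearMap.det (φ j).linear| < 1) :
    interior F = ∅ := by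
  borelize E
  let μ : Measure E := Measure.addHaar
  refine μ.interior_eq_empty_of_null ?_
  by_contra hμF
  have hle : μ F ≤ (∑ j, ENNReal.ofReal |LinearMap.det (φ j).linear|) * μ F :=
    calc μ F ≤ ∑ j, μ (φ j '' F) := (measure_mono hF).trans (measure_iUnion_fintype_le μ _)
      _ = _ := by simp only [μ.addHaar_image_affineMap, Finset.sum_mul]
  refine hle.not_gt ?_
  simpa only [one_mul] using (ENNReal.mul_lt_mul_iff_left hμF hFc.measure_lt_top.ne).mpr hφ

end SelfAffine

theorem Convex.closure_interior_diff_eq {E : Type*} [AddCommGroup E] [Module ℝ E]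
    [TopologicalSpace E] [IsTopologicalAddGroup E] [ContinuousSMul ℝ E] {K F : Set E}
    (hK : Convex ℝ K) (hKint : (interior K).Nonempty) (hF : interior F = ∅) :
    closure (interior K \ F) = closure K := by
  refine Subset.antisymm (closure_mono (sdiff_subset.trans interior_subset)) ?_
  rw [← hK.closure_interior_eq_closure_of_nonempty_interior hKint]
  exact closure_minimal ((interior_eq_empty_iff_dense_compl.mp hF).open_subset_closure_inter
    isOpen_interior) isClosed_closure

theorem frontier_interior_diff {X : Type*} [TopologicalSpace X] {K F : Set X}
    (hF : IsClosed F) (hFK : F ⊆ K) (hcl : closure (interior K \ F) = K) :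
    frontier (interior K \ F) = F ∪ frontier K := by
  have hK : IsClosed K := hcl ▸ isClosed_closure
  rw [frontier, (isOpen_interior.sdiff hF).interior_eq, hcl, hK.frontier_eq, sdiff_sdiff_right,
    inter_eq_right.mpr hFK, union_comm]

theorem frontier_convexHull_subset_iff_of_tileset {E : Type*} [NormedAddCommGroup E]
    [NormedSpace ℝ E] [FiniteDimensional ℝ E] {ι : Type*} [Fintype ι] (φ : ι → E →ᵃ[ℝ] E)
    {F : Set E} (hFc : IsCompact F) (hF : F = ⋃ j, φ j '' F)
    (hcover : ¬ interior (convexHull ℝ F) ⊆ ⋃ j, φ j '' convexHull ℝ F)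
    (hdisj : Pairwise fun j l =>
      Disjoint (interior (φ j '' convexHull ℝ F)) (interior (φ l '' convexHull ℝ F))) :
    frontier (convexHull ℝ F) ⊆ F ↔ frontier (interior (convexHull ℝ F) \ F) = F := by
  set K := convexHull ℝ F
  have hKc : IsCompact K := isCompact_convexHull hFc
  have hmaps : ∀ j, φ j '' K ⊆ K := fun j => by
    rw [(φ j).image_convexHull]
    exact convexHull_mono ((subset_iUnion (fun j => φ j '' F) j).trans hF.symm.subset)
  have hFint : interior F = ∅ := interior_eq_empty_of_subset_iUnion_image φ hFc hF.subset
    (sum_ofReal_abs_det_lt_one_of_tileset φ (convex_convexHull ℝ F) hKc hmaps hcover hdisj)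
  have hcl : closure (interior K \ F) = K := by
    rw [(convex_convexHull ℝ F).closure_interior_diff_eq (nonempty_of_not_subset hcover).of_sdiff
      hFint, hKc.isClosed.closure_eq]
  rw [frontier_interior_diff hFc.isClosed (subset_convexHull ℝ F) hcl, union_eq_left]

theorem stmt_17_general (d J : ℕ)
    (r : Fin J → ℝ)
    (A : Fin J → (EuclideanSpace ℝ (Fin d) ≃ₗᵢ[ℝ] EuclideanSpace ℝ (Fin d)))
    (a : Fin J → EuclideanSpace ℝ (Fin d))
    (φ : Fin J → EuclideanSpace ℝ (Fin d) → EuclideanSpace ℝ (Fin d))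
    (hφ : ∀ j x, φ j x = r j • (A j x) + a j)
    (F : Set (EuclideanSpace ℝ (Fin d)))
    (hFc : IsCompact F) (hF : F = ⋃ j, φ j '' F)
    (K : Set (EuclideanSpace ℝ (Fin d))) (hK : K = convexHull ℝ F)
    (htile1 : ¬ interior K ⊆ ⋃ j, φ j '' K)
    (htile2 : ∀ j ℓ, j ≠ ℓ → interior (φ j '' K) ∩ interior (φ ℓ '' K) = ∅) :
    frontier K ⊆ F ↔ frontier (interior K \ F) = F := by
  let f : Fin J → EuclideanSpace ℝ (Fin d) →ᵃ[ℝ] EuclideanSpace ℝ (Fin d) := fun j =>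
    (r j • ((A j).toLinearEquiv : _ →ₗ[ℝ] _)).toAffineMap + AffineMap.const ℝ _ (a j)
  obtain rfl : φ = fun j => ⇑(f j) := funext fun j => funext fun x => by simp [f, hφ]
  subst hK
  exact frontier_convexHull_subset_iff_of_tileset f hFc hF htile1
    fun j l hjl => disjoint_iff_inter_eq_empty.mpr (htile2 j l hjl)

/-- Let `Φ = {φ_1, …, φ_J}` be a self-similar system on `ℝ^d` with
attractor `F` and convex hull `K = [F]`, satisfying the tileset condition.  Then
the following are equivalent: (i) `∂K ⊆ F`; (ii) `∂T = F`, where `T = int K \ F`. -/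
theorem stmt_17 (d J : ℕ) (hd : 1 ≤ d) (hJ : 2 ≤ J)
    (r : Fin J → ℝ) (hr : ∀ j, r j ∈ Set.Ioo (0 : ℝ) 1)
    (A : Fin J → (EuclideanSpace ℝ (Fin d) ≃ₗᵢ[ℝ] EuclideanSpace ℝ (Fin d)))
    (a : Fin J → EuclideanSpace ℝ (Fin d))
    (φ : Fin J → EuclideanSpace ℝ (Fin d) → EuclideanSpace ℝ (Fin d))
    (hφ : ∀ j x, φ j x = r j • (A j x) + a j)
    (F : Set (EuclideanSpace ℝ (Fin d)))
    (hFne : F.Nonempty) (hFc : IsCompact F) (hF : F = ⋃ j, φ j '' F)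
    (K : Set (EuclideanSpace ℝ (Fin d))) (hK : K = convexHull ℝ F)
    (htile1 : ¬ interior K ⊆ ⋃ j, φ j '' K)
    (htile2 : ∀ j ℓ, j ≠ ℓ → interior (φ j '' K) ∩ interior (φ ℓ '' K) = ∅) :
    frontier K ⊆ F ↔ frontier (interior K \ F) = F :=
  stmt_17_general d J r A a φ hφ F hFc hF K hK htile1 htile2
end
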